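/- arXiv:2101.11443 — 7 statements merged into one kernel-verified Lean document; each statement's English description precedes it below -/
import Mathlib

section
/- Let f : X → U → ℝ where X is a convex subset of ℝⁿ and f(·,u) is convex for every u ∈ U. Suppose sequences x₁,…,x_T ∈ X and u₁,…,u_T ∈ U satisfy the two regret bounds: ∑_{t=1}^T f(x_t,u_t) − min_{x∈X} ∑_{t=1}^T f(x,u_t) ≤ R_x and max_{u∈U} ∑_{t=1}^T f(x_t,u) − ∑_{t=1}^T f(x_t,u_t) ≤ R_u. Then the average point x̄ = (1/T)∑_{t=1}^T x_t satisfies max_{u∈U} f(x̄,u) − min_{x∈X} max_{u∈U} f(x,u) ≤ (R_x + R_u)/T. -/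
/-!
By Jensen, the worst case of the average point is at most `T⁻¹ · max_u ∑ₜ f(xₜ, u)`. The two
regret bounds bound this by `T⁻¹ · (R_u + R_x + min_x ∑ₜ f(x, uₜ))`, and
`min_x ∑ₜ f(x, uₜ) ≤ T · min_x max_u f(x, u)` because each `uₜ` is one admissible choice of `u`.
-/

open Set Finset

theorem ConvexOn.map_card_inv_smul_sum_le {E ι : Type*} [AddCommGroup E] [Module ℝ E] [Fintype ι]
    [Nonempty ι] {s : Set E} {g : E → ℝ} (hg : ConvexOn ℝ s g) {p : ι → E}
    (hp : ∀ i, p i ∈ s) :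
    g ((Fintype.card ι : ℝ)⁻¹ • ∑ i, p i) ≤ (Fintype.card ι : ℝ)⁻¹ * ∑ i, g (p i) := by
  have hweights : ∑ _i : ι, (Fintype.card ι : ℝ)⁻¹ = 1 := by
    simp [Finset.card_univ]
  simpa [Finset.smul_sum, Finset.mul_sum] using
    hg.map_sum_le (fun _ _ => by positivity) hweights (fun i _ => hp i)

section MinimaxAverage

variable {E U ι : Type*} [Fintype ι] [Nonempty ι] {f : E → U → ℝ}

theorem iSup_apply_average_le [AddCommGroup E] [Module ℝ E] [Nonempty U] {s : Set E}
    (hf : ∀ u, ConvexOn ℝ s (f · u)) {p : ι → E} (hp : ∀ i, p i ∈ s)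
    (hbdd : BddAbove (range fun u => ∑ i, f (p i) u)) :
    ⨆ u, f ((Fintype.card ι : ℝ)⁻¹ • ∑ i, p i) u
      ≤ (Fintype.card ι : ℝ)⁻¹ * ⨆ u, ∑ i, f (p i) u :=
  ciSup_le fun u => ((hf u).map_card_inv_smul_sum_le hp).trans <|
    mul_le_mul_of_nonneg_left (le_ciSup hbdd u) (by positivity)

theorem sInf_image_sum_le_card_mul_sInf_image_iSup {s : Set E} (hs : s.Nonempty) (v : ι → U)
    (hbddBelow : BddBelow ((fun x => ∑ i, f x (v i)) '' s))
    (hbddAbove : ∀ x, BddAbove (range (f x))) :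
    sInf ((fun x => ∑ i, f x (v i)) '' s)
      ≤ Fintype.card ι * sInf ((fun x => ⨆ u, f x u) '' s) := by
  have hcard : (0 : ℝ) < Fintype.card ι := by exact_mod_cast Fintype.card_pos
  rw [← div_le_iff₀' hcard]
  refine le_csInf (hs.image _) ?_
  rintro _ ⟨x, hx, rfl⟩
  rw [div_le_iff₀' hcard]
  calc sInf ((fun x => ∑ i, f x (v i)) '' s) ≤ ∑ i, f x (v i) :=
        csInf_le hbddBelow (mem_image_of_mem _ hx)
    _ ≤ ∑ _i : ι, ⨆ u, f x u := Finset.sum_le_sum fun i _ => le_ciSup (hbddAbove x) (v i)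
    _ = Fintype.card ι * ⨆ u, f x u := by simp

end MinimaxAverage

theorem stmt_0_general {n : ℕ} {U : Type*} [TopologicalSpace U] [CompactSpace U] [Nonempty U]
    (X : Set (EuclideanSpace ℝ (Fin n))) (hXne : X.Nonempty) (hXcpt : IsCompact X)
    (f : EuclideanSpace ℝ (Fin n) → U → ℝ)
    (hfcont : Continuous fun p : EuclideanSpace ℝ (Fin n) × U => f p.1 p.2)
    (hfconv : ∀ u : U, ConvexOn ℝ X fun x => f x u)
    (T : ℕ) (hT : 1 ≤ T)
    (x : Fin T → EuclideanSpace ℝ (Fin n)) (u : Fin T → U)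
    (hxX : ∀ t, x t ∈ X)
    (Rx Ru : ℝ)
    (hRx : (∑ t, f (x t) (u t)) - sInf ((fun x' => ∑ t, f x' (u t)) '' X) ≤ Rx)
    (hRu : (⨆ u' : U, ∑ t, f (x t) u') - ∑ t, f (x t) (u t) ≤ Ru) :
    (⨆ u' : U, f ((T : ℝ)⁻¹ • ∑ t, x t) u')
      - sInf ((fun x' => ⨆ u' : U, f x' u') '' X) ≤ (Rx + Ru) / T := by
  have : NeZero T := ⟨by omega⟩
  have hTpos : (0 : ℝ) < T := by exact_mod_cast hT
  have hbddAbove : ∀ x', BddAbove (range (f x')) := fun x' =>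
    (isCompact_range (hfcont.uncurry_left x')).bddAbove
  have hbddAbove_sum : BddAbove (range fun u' => ∑ t, f (x t) u') :=
    (isCompact_range (continuous_finsetSum _ fun t _ => hfcont.uncurry_left (x t))).bddAbove
  have haverage := iSup_apply_average_le hfconv hxX hbddAbove_sum
  have hbddBelow_sum : BddBelow ((fun x' => ∑ t, f x' (u t)) '' X) :=
    (hXcpt.image (continuous_finsetSum _ fun t _ => hfcont.uncurry_right (u t))).bddBelow
  have hminimax := sInf_image_sum_le_card_mul_sInf_image_iSup hXne u hbddBelow_sum hbddAbove
  rw [Fintype.card_fin] at haverage hminimax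
  rw [le_div_iff₀ hTpos]
  have hT_average := mul_le_mul_of_nonneg_left haverage hTpos.le
  rw [← mul_assoc, mul_inv_cancel₀ hTpos.ne', one_mul] at hT_average
  linarith

/-- Two weak learners: regret bounds imply the average iterate is
near-minimax optimal (Theorem 1 / thm:main-result). -/
theorem stmt_0 {n : ℕ} {U : Type*} [TopologicalSpace U] [CompactSpace U] [Nonempty U]
    (X : Set (EuclideanSpace ℝ (Fin n))) (hXne : X.Nonempty) (hXcpt : IsCompact X)
    (hXconv : Convex ℝ X)
    (f : EuclideanSpace ℝ (Fin n) → U → ℝ)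
    (hfcont : Continuous fun p : EuclideanSpace ℝ (Fin n) × U => f p.1 p.2)
    (hfconv : ∀ u : U, ConvexOn ℝ X fun x => f x u)
    (T : ℕ) (hT : 1 ≤ T)
    (x : Fin T → EuclideanSpace ℝ (Fin n)) (u : Fin T → U)
    (hxX : ∀ t, x t ∈ X)
    (Rx Ru : ℝ)
    (hRx : (∑ t, f (x t) (u t)) - sInf ((fun x' => ∑ t, f x' (u t)) '' X) ≤ Rx)
    (hRu : (⨆ u' : U, ∑ t, f (x t) u') - ∑ t, f (x t) (u t) ≤ Ru) :
    (⨆ u' : U, f ((T : ℝ)⁻¹ • ∑ t, x t) u')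
      - sInf ((fun x' => ⨆ u' : U, f x' u') '' X) ≤ (Rx + Ru) / T :=
  stmt_0_general X hXne hXcpt f hfcont hfconv T hT x u hxX Rx Ru hRx hRu
end

section
/- Let f : X → U → ℝ with X convex and f(·,u) convex for every u. Suppose u₁,…,u_T ∈ U is any sequence satisfying max_{u∈U} ∑_{t=1}^T f(x_t,u) − ∑_{t=1}^T f(x_t,u_t) ≤ R_u, where each x_t is chosen as a minimizer x_t ∈ argmin_{x∈X} f(x,u_t). Then x̄ = (1/T)∑ x_t satisfies max_{u∈U} f(x̄,u) − min_{x∈X} max_{u∈U} f(x,u) ≤ R_u/T. -/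
/-!
Each `x t` is a best response to `u t`, so `∑ₜ f (x t) (u t)` is at most `T` times the value
`max_u f x' u` of any `x' ∈ X`, hence at most `T` times the minimax value. On the other side,
Jensen's inequality bounds `max_u f x̄ u` by `T⁻¹ · max_u ∑ₜ f (x t) u`. The difference of the two
bounds is `T⁻¹` times the regret of the `u`-player.
-/

open Finset

section Average

variable {E ι : Type*} [AddCommGroup E] [Module ℝ E] [Fintype ι] [Nonempty ι]

lemma sum_inv_card_eq_one : ∑ _i : ι, (Fintype.card ι : ℝ)⁻¹ = 1 := by
  simp [Fintype.card_ne_zero]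

lemma ConvexOn.map_inv_card_smul_sum_le {s : Set E} {g : E → ℝ} (hg : ConvexOn ℝ s g)
    {x : ι → E} (hx : ∀ i, x i ∈ s) :
    g ((Fintype.card ι : ℝ)⁻¹ • ∑ i, x i) ≤ (Fintype.card ι : ℝ)⁻¹ * ∑ i, g (x i) := by
  rw [smul_sum, mul_sum]
  exact hg.map_sum_le (fun _ _ => by positivity) sum_inv_card_eq_one fun i _ => hx i

lemma iSup_map_inv_card_smul_sum_le {U : Type*} [Nonempty U] {s : Set E} {f : E → U → ℝ}
    (hf : ∀ u, ConvexOn ℝ s fun y => f y u) {x : ι → E} (hx : ∀ i, x i ∈ s)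
    (hbdd : BddAbove (Set.range fun u => ∑ i, f (x i) u)) :
    ⨆ u, f ((Fintype.card ι : ℝ)⁻¹ • ∑ i, x i) u
      ≤ (Fintype.card ι : ℝ)⁻¹ * ⨆ u, ∑ i, f (x i) u :=
  ciSup_le fun u => ((hf u).map_inv_card_smul_sum_le hx).trans <|
    mul_le_mul_of_nonneg_left (le_ciSup hbdd u) (by positivity)

end Average

lemma inv_card_mul_sum_le_sInf_iSup {α U ι : Type*} [Fintype ι] [Nonempty ι] {s : Set α}
    (hs : s.Nonempty) {f : α → U → ℝ} (hbdd : ∀ y, BddAbove (Set.range (f y)))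
    {x : ι → α} {u : ι → U}
    (hbest : ∀ i, ∀ y ∈ s, f (x i) (u i) ≤ f y (u i)) :
    (Fintype.card ι : ℝ)⁻¹ * ∑ i, f (x i) (u i) ≤ sInf ((fun y => ⨆ v, f y v) '' s) := by
  refine le_csInf (hs.image _) ?_
  rintro _ ⟨y, hy, rfl⟩
  have hsum : ∑ i, f (x i) (u i) ≤ Fintype.card ι * ⨆ v, f y v := by
    simpa using sum_le_sum fun i (_ : i ∈ univ) => (hbest i y hy).trans (le_ciSup (hbdd y) (u i))
  exact (inv_mul_le_iff₀ (by positivity)).mpr hsum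

theorem stmt_1_general {n : ℕ} {U : Type*} [TopologicalSpace U] [CompactSpace U] [Nonempty U]
    (X : Set (EuclideanSpace ℝ (Fin n))) (hXne : X.Nonempty)
    (f : EuclideanSpace ℝ (Fin n) → U → ℝ)
    (hfcont : Continuous fun p : EuclideanSpace ℝ (Fin n) × U => f p.1 p.2)
    (hfconv : ∀ u : U, ConvexOn ℝ X fun x => f x u)
    (T : ℕ) (hT : 1 ≤ T)
    (x : Fin T → EuclideanSpace ℝ (Fin n)) (u : Fin T → U)
    (hxX : ∀ t, x t ∈ X)
    (hxmin : ∀ t, ∀ x' ∈ X, f (x t) (u t) ≤ f x' (u t))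
    (Ru : ℝ)
    (hRu : (⨆ u' : U, ∑ t, f (x t) u') - ∑ t, f (x t) (u t) ≤ Ru) :
    (⨆ u' : U, f ((T : ℝ)⁻¹ • ∑ t, x t) u')
      - sInf ((fun x' => ⨆ u' : U, f x' u') '' X) ≤ Ru / T := by
  have : Nonempty (Fin T) := ⟨⟨0, hT⟩⟩
  have hcont (y : EuclideanSpace ℝ (Fin n)) : Continuous (f y) := hfcont.comp (.prodMk_right y)
  have hupper := iSup_map_inv_card_smul_sum_le hfconv hxX
    (isCompact_range (continuous_finsetSum univ fun t _ => hcont (x t))).bddAbove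
  have hlower := inv_card_mul_sum_le_sInf_iSup hXne
    (fun y => (isCompact_range (hcont y)).bddAbove) hxmin
  simp only [Fintype.card_fin] at hupper hlower
  have hregret := mul_le_mul_of_nonneg_left hRu (inv_nonneg.mpr (Nat.cast_nonneg T))
  rw [mul_sub] at hregret
  rw [div_eq_inv_mul]
  linarith

/-- Biased play with a strong dual learner: if each `x t` is an exact
minimizer of `f (·, u t)` over `X`, the regret bound of the `u`-player
alone controls the minimax gap of the average iterate (Theorem 2). -/
theorem stmt_1 {n : ℕ} {U : Type*} [TopologicalSpace U] [CompactSpace U] [Nonempty U]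
    (X : Set (EuclideanSpace ℝ (Fin n))) (hXne : X.Nonempty) (hXcpt : IsCompact X)
    (hXconv : Convex ℝ X)
    (f : EuclideanSpace ℝ (Fin n) → U → ℝ)
    (hfcont : Continuous fun p : EuclideanSpace ℝ (Fin n) × U => f p.1 p.2)
    (hfconv : ∀ u : U, ConvexOn ℝ X fun x => f x u)
    (T : ℕ) (hT : 1 ≤ T)
    (x : Fin T → EuclideanSpace ℝ (Fin n)) (u : Fin T → U)
    (hxX : ∀ t, x t ∈ X)
    (hxmin : ∀ t, ∀ x' ∈ X, f (x t) (u t) ≤ f x' (u t))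
    (Ru : ℝ)
    (hRu : (⨆ u' : U, ∑ t, f (x t) u') - ∑ t, f (x t) (u t) ≤ Ru) :
    (⨆ u' : U, f ((T : ℝ)⁻¹ • ∑ t, x t) u')
      - sInf ((fun x' => ⨆ u' : U, f x' u') '' X) ≤ Ru / T :=
  stmt_1_general X hXne f hfcont hfconv T hT x u hxX hxmin Ru hRu
end

section
/- Let U = conv{(1,1), (−1,−1), (2,1)} ⊆ ℝ² and let L be the segment conv{(0,1), (−2,−1)} ⊆ ℝ². For every x ∈ L, min_{u∈U} ⟨u,x⟩ ≤ −1/5. -/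
/-!
A single point of `U` works for all of `L`: `u = (1/5, -1/5) = (2/5)•(2,1) + (3/5)•(-1,-1)`
lies in `U`, and `⟨u, x⟩ = (x₀ - x₁)/5 = -1/5` for every `x` on the line `x₀ - x₁ = -1`
through both endpoints of `L`.
-/

open Matrix

theorem Matrix.dotProduct_eq_of_mem_segment {𝕜 ι : Type*} [CommSemiring 𝕜] [PartialOrder 𝕜]
    [Fintype ι] {u a b x : ι → 𝕜} {c : 𝕜} (ha : u ⬝ᵥ a = c) (hb : u ⬝ᵥ b = c)
    (hx : x ∈ segment 𝕜 a b) : u ⬝ᵥ x = c := by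
  obtain ⟨s, t, -, -, hst, rfl⟩ := hx
  rw [dotProduct_add, dotProduct_smul, dotProduct_smul, ha, hb, smul_eq_mul, smul_eq_mul,
    ← add_mul, hst, one_mul]

theorem one_fifth_neg_one_fifth_mem_convexHull :
    (![1 / 5, -1 / 5] : Fin 2 → ℝ) ∈
      convexHull ℝ ({![1, 1], ![-1, -1], ![2, 1]} : Set (Fin 2 → ℝ)) := by
  have hseg : segment ℝ (![2, 1] : Fin 2 → ℝ) ![-1, -1] ⊆
      convexHull ℝ ({![1, 1], ![-1, -1], ![2, 1]} : Set (Fin 2 → ℝ)) :=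
    segment_subset_convexHull (by simp) (by simp)
  refine hseg ⟨2 / 5, 3 / 5, by norm_num, by norm_num, by norm_num, ?_⟩
  ext i
  fin_cases i <;> norm_num

/-- On the segment between `(0,1)` and `(−2,−1)`, the worst case over
`U = conv{(1,1),(−1,−1),(2,1)}` is at most `−1/5`. -/
theorem stmt_4 :
    ∀ x ∈ segment ℝ (![0, 1] : Fin 2 → ℝ) ![-2, -1],
      ∃ u ∈ convexHull ℝ ({![1, 1], ![-1, -1], ![2, 1]} : Set (Fin 2 → ℝ)),
        u ⬝ᵥ x ≤ -1 / 5 := by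
  intro x hx
  refine ⟨_, one_fifth_neg_one_fifth_mem_convexHull, le_of_eq ?_⟩
  exact dotProduct_eq_of_mem_segment (by norm_num [dotProduct, Fin.sum_univ_two])
    (by norm_num [dotProduct, Fin.sum_univ_two]) hx
end

section
/- Let f¹,…,fⁿ : X → ℝ (for fixed choices of u the dependence on u is suppressed) and let Λ ⊆ Δ(n) be a subset of the probability simplex. Suppose for each i a sequence u^i_t ∈ U^i satisfies max_{u∈U^i} ∑_{t=1}^T f^i(x_t,u) − ∑_{t=1}^T f^i(x_t,u^i_t) ≤ R^i for all i, and λ_t ∈ Λ satisfies max_{λ∈Λ} ∑_{t=1}^T ⟨λ, F(x_t, ū_t)⟩ − ∑_{t=1}^T ⟨λ_t, F(x_t, ū_t)⟩ ≤ R_λ, where F(x, ū) = (f¹(x,u¹),…,fⁿ(x,uⁿ)) and ū_t = (u¹_t,…,uⁿ_t). Then max_{λ∈Λ, ū∈∏ᵢU^i} ∑_{t=1}^T ⟨λ, F(x_t,ū)⟩ − ∑_{t=1}^T ⟨λ_t, F(x_t,ū_t)⟩ ≤ max_i R^i + R_λ. -/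
/-!
Write `G i u = ∑ₜ fⁱ(xₜ, u)` for the cumulative payoff of coordinate `i`, so that the joint payoff
of `(λ, ū)` is the weighted sum `∑ᵢ λᵢ Gⁱ(uⁱ)`. The coordinate regret bounds give
`Gⁱ(uⁱ) ≤ ∑ₜ fⁱ(xₜ, uⁱₜ) + Rⁱ`; weighting by `λ ∈ Δ(n)`, the first part is at most the best
`λ`-payoff against the played `ūₜ`, and the second part, a convex combination of the `Rⁱ`, is at
most `maxᵢ Rⁱ`.
-/

open Finset

theorem sum_mul_le_ciSup_of_mem_stdSimplex {ι : Type*} [Fintype ι] {w : ι → ℝ}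
    (hw : w ∈ stdSimplex ℝ ι) (a : ι → ℝ) : ∑ i, w i * a i ≤ ⨆ i, a i :=
  calc ∑ i, w i * a i ≤ ∑ i, w i * ⨆ j, a j :=
        sum_le_sum fun i _ =>
          mul_le_mul_of_nonneg_left (le_ciSup (Set.finite_range a).bddAbove i) (hw.1 i)
    _ = ⨆ j, a j := by rw [← sum_mul, hw.2, one_mul]

theorem sum_sum_mul_comm {ι τ : Type*} [Fintype ι] [Fintype τ] (l : ι → ℝ) (F : τ → ι → ℝ) :
    ∑ t, ∑ i, l i * F t i = ∑ i, l i * ∑ t, F t i := by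
  rw [sum_comm]
  simp only [mul_sum]

theorem sSup_sum_mul_le_ciSup_add_sSup {ι : Type*} [Fintype ι] {U : ι → Type*}
    [∀ i, Finite (U i)] [∀ i, Nonempty (U i)] {Λ : Set (ι → ℝ)} (hΛne : Λ.Nonempty)
    (hΛ : Λ ⊆ stdSimplex ℝ ι) (g : ∀ i, U i → ℝ) (b R : ι → ℝ)
    (hR : ∀ i, (⨆ u, g i u) - b i ≤ R i) :
    sSup {v : ℝ | ∃ l ∈ Λ, ∃ ub : ∀ i, U i, v = ∑ i, l i * g i (ub i)}
      ≤ (⨆ i, R i) + sSup ((fun l => ∑ i, l i * b i) '' Λ) := by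
  obtain ⟨l₀, hl₀⟩ := hΛne
  refine csSup_le ⟨_, l₀, hl₀, fun _ => Classical.arbitrary _, rfl⟩ ?_
  rintro _ ⟨l, hl, ub, rfl⟩
  have hbdd : BddAbove ((fun l => ∑ i, l i * b i) '' Λ) :=
    ⟨⨆ i, b i, by
      rintro _ ⟨l, hl, rfl⟩
      exact sum_mul_le_ciSup_of_mem_stdSimplex (hΛ hl) b⟩
  have hg : ∀ i, g i (ub i) ≤ b i + R i := fun i => by
    have := le_ciSup (Set.finite_range (g i)).bddAbove (ub i)
    linarith [hR i]
  calc ∑ i, l i * g i (ub i) ≤ ∑ i, l i * (b i + R i) :=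
        sum_le_sum fun i _ => mul_le_mul_of_nonneg_left (hg i) ((hΛ hl).1 i)
    _ = ∑ i, l i * R i + ∑ i, l i * b i := by
        rw [← sum_add_distrib]
        exact sum_congr rfl fun i _ => by ring
    _ ≤ (⨆ i, R i) + sSup ((fun l => ∑ i, l i * b i) '' Λ) :=
        add_le_add (sum_mul_le_ciSup_of_mem_stdSimplex (hΛ hl) R)
          (le_csSup hbdd ⟨l, hl, rfl⟩)

theorem stmt_8_general {n : ℕ} {X : Type*} {U : Fin n → Type*}
    [∀ i, Fintype (U i)] [∀ i, Nonempty (U i)]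
    (Λ : Set (Fin n → ℝ)) (hΛne : Λ.Nonempty)
    (hΛ : Λ ⊆ stdSimplex ℝ (Fin n))
    (f : ∀ i : Fin n, X → U i → ℝ)
    (T : ℕ)
    (x : Fin T → X) (uu : Fin T → ∀ i, U i) (lam : Fin T → Fin n → ℝ)
    (R : Fin n → ℝ) (Rlam : ℝ)
    (hRu : ∀ i, (⨆ u' : U i, ∑ t, f i (x t) u') - ∑ t, f i (x t) (uu t i) ≤ R i)
    (hRlam : sSup ((fun l => ∑ t, ∑ i, l i * f i (x t) (uu t i)) '' Λ)
        - (∑ t, ∑ i, lam t i * f i (x t) (uu t i)) ≤ Rlam) :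
    sSup {v : ℝ | ∃ l ∈ Λ, ∃ ub : ∀ i, U i,
        v = ∑ t, ∑ i, l i * f i (x t) (ub i)}
      - (∑ t, ∑ i, lam t i * f i (x t) (uu t i)) ≤ (⨆ i, R i) + Rlam := by
  simp only [sum_sum_mul_comm] at hRlam ⊢
  have := sSup_sum_mul_le_ciSup_add_sSup hΛne hΛ (fun i u => ∑ t, f i (x t) u)
    (fun i => ∑ t, f i (x t) (uu t i)) R hRu
  linarith

/-- Proposition 1 (pro.multi.dual): combining per-coordinate `u`-regret
bounds with a `λ`-regret bound yields a joint regret bound for the dual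
player `(ū, λ)`. -/
theorem stmt_8 {n : ℕ} (hn : 0 < n) {X : Type*} {U : Fin n → Type*}
    [∀ i, Fintype (U i)] [∀ i, Nonempty (U i)]
    (Λ : Set (Fin n → ℝ)) (hΛne : Λ.Nonempty) (hΛcpt : IsCompact Λ)
    (hΛ : Λ ⊆ stdSimplex ℝ (Fin n))
    (f : ∀ i : Fin n, X → U i → ℝ)
    (T : ℕ) (hT : 1 ≤ T)
    (x : Fin T → X) (uu : Fin T → ∀ i, U i) (lam : Fin T → Fin n → ℝ)
    (hlam : ∀ t, lam t ∈ Λ)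
    (R : Fin n → ℝ) (Rlam : ℝ)
    (hRu : ∀ i, (⨆ u' : U i, ∑ t, f i (x t) u') - ∑ t, f i (x t) (uu t i) ≤ R i)
    (hRlam : sSup ((fun l => ∑ t, ∑ i, l i * f i (x t) (uu t i)) '' Λ)
        - (∑ t, ∑ i, lam t i * f i (x t) (uu t i)) ≤ Rlam) :
    sSup {v : ℝ | ∃ l ∈ Λ, ∃ ub : ∀ i, U i,
        v = ∑ t, ∑ i, l i * f i (x t) (ub i)}
      - (∑ t, ∑ i, lam t i * f i (x t) (uu t i)) ≤ (⨆ i, R i) + Rlam :=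
  stmt_8_general Λ hΛne hΛ f T x uu lam R Rlam hRu hRlam
end

section
/- Let X ⊆ ℝᵐ be convex, Λ ⊆ Δ(n), U¹,…,Uⁿ sets, and f^i(·,u) convex on X for every u ∈ U^i. Define F(x,ū) = max_{λ∈Λ} ∑ᵢ λᵢ f^i(x,u^i). Suppose sequences x_t ∈ X, u^i_t ∈ U^i satisfy: (i) ∑_{t=1}^T F(x_t,ū_t) − min_{x∈X} ∑_{t=1}^T F(x,ū_t) ≤ R_x; (ii) for each i, max_{u∈U^i} ∑_{t=1}^T f^i(x_t,u) − ∑_{t=1}^T f^i(x_t,u^i_t) ≤ R^i. Then x̄ = (1/T)∑ x_t satisfies max_{ū∈∏U^i} F(x̄,ū) − min_{x∈X} max_{ū∈∏U^i} F(x,ū) ≤ (R_x + max_i R^i)/T. -/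
/-!
Write `x̄` for the average iterate. For each `ū`, take `λ ∈ Λ` attaining `F(x̄, ū)`;
Jensen's inequality for every `fⁱ(·, uⁱ)` and the dual regret bounds give
  `T F(x̄, ū) ≤ ∑ᵢ λᵢ (∑ₜ fⁱ(xₜ, uⁱₜ) + Rⁱ) ≤ ∑ₜ F(xₜ, ūₜ) + maxᵢ Rⁱ`,
while `∑ₜ F(x, ūₜ) ≤ T max_ū F(x, ū)` and the primal regret bound give
  `∑ₜ F(xₜ, ūₜ) ≤ R_x + T min_x max_ū F(x, ū)`.
For the infima not to be junk values of `sInf`, one needs that a convex function on a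
bounded convex set in finite dimension is bounded below.
-/

open Metric Bornology Set

section BddBelow

variable {E : Type*} [NormedAddCommGroup E] [NormedSpace ℝ E] {s : Set E} {f : E → ℝ}

theorem ConvexOn.bddBelow_image_of_closedBall_subset (hf : ConvexOn ℝ s f) (hs : IsBounded s)
    {z : E} {δ M : ℝ} (hδ : 0 < δ) (hball : closedBall z δ ⊆ s)
    (hM : ∀ y ∈ closedBall z δ, f y ≤ M) : BddBelow (f '' s) := by
  obtain ⟨D, hD, hsD⟩ := hs.subset_closedBall_lt 0 z
  refine ⟨f z - D / δ * (M - f z), ?_⟩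
  rintro _ ⟨x, hx, rfl⟩
  -- `z` is a convex combination of `x` and the point `y` of the ball opposite to `x`, so
  -- convexity bounds `f x` from below in terms of `f z` and `M`.
  set y := z + (δ / D) • (z - x)
  have hy : y ∈ closedBall z δ := by
    rw [mem_closedBall, dist_eq_norm, add_sub_cancel_left, norm_smul, norm_sub_rev,
      Real.norm_of_nonneg (by positivity), ← dist_eq_norm]
    calc δ / D * dist x z ≤ δ / D * D := by gcongr; exact hsD hx
      _ = δ := div_mul_cancel₀ _ hD.ne'
  have hsum : δ / (δ + D) + D / (δ + D) = 1 := by field_simp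
  have hz : (δ / (δ + D)) • x + (D / (δ + D)) • y = z := by
    rw [smul_add, smul_smul, show D / (δ + D) * (δ / D) = δ / (δ + D) by field_simp]
    linear_combination (norm := module) hsum • z
  have hconv := hf.2 hx (hball hy) (by positivity) (by positivity) hsum
  rw [hz, smul_eq_mul, smul_eq_mul, div_mul_eq_mul_div, div_mul_eq_mul_div, ← add_div,
    le_div_iff₀ (by positivity)] at hconv
  rw [sub_le_comm, div_mul_eq_mul_div, le_div_iff₀ hδ]
  linarith [mul_le_mul_of_nonneg_left (hM y hy) hD.le]

theorem ConvexOn.bddBelow_image_of_interior_nonempty [FiniteDimensional ℝ E]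
    (hf : ConvexOn ℝ s f) (hs : IsBounded s) (hint : (interior s).Nonempty) :
    BddBelow (f '' s) := by
  obtain ⟨z, hz⟩ := hint
  obtain ⟨ε, hε, hball⟩ := Metric.isOpen_iff.1 isOpen_interior z hz
  have hsub : closedBall z (ε / 2) ⊆ interior s :=
    (closedBall_subset_ball (by linarith)).trans hball
  obtain ⟨M, hM⟩ :=
    (isCompact_closedBall z (ε / 2)).bddAbove_image (hf.continuousOn_interior.mono hsub)
  exact hf.bddBelow_image_of_closedBall_subset hs (by positivity) (hsub.trans interior_subset)
    fun y hy => hM ⟨y, hy, rfl⟩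

theorem ConvexOn.bddBelow_image [FiniteDimensional ℝ E] (hf : ConvexOn ℝ s f)
    (hs : IsBounded s) : BddBelow (f '' s) := by
  rcases s.eq_empty_or_nonempty with rfl | hne
  · simp
  obtain ⟨z, hz⟩ := id hne
  -- Inside the direction of its affine span, `s` has nonempty interior.
  let p : affineSpan ℝ s := ⟨z, subset_affineSpan ℝ s hz⟩
  have : Nonempty (affineSpan ℝ s) := ⟨p⟩
  let ψ := (AffineIsometryEquiv.constVSub ℝ p).symm
  let φ : (affineSpan ℝ s).direction →ᵃⁱ[ℝ] E :=
    (affineSpan ℝ s).subtypeₐᵢ.comp ψ.toAffineIsometry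
  have hrange : s ⊆ range φ := fun x hx =>
    ⟨ψ.symm ⟨x, subset_affineSpan ℝ s hx⟩, by simp [φ]⟩
  have hint : (interior (φ ⁻¹' s)).Nonempty := by
    obtain ⟨_, y, hy, rfl⟩ := hne.intrinsicInterior hf.1
    refine ⟨ψ.symm y, ?_⟩
    rw [show φ ⁻¹' s = ψ.toHomeomorph ⁻¹' ((↑) ⁻¹' s) from rfl, ← Homeomorph.preimage_interior]
    simpa using hy
  have := (hf.comp_affineMap φ.toAffineMap).bddBelow_image_of_interior_nonempty
    (φ.isometry.antilipschitz.isBounded_preimage hs) hint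
  rwa [image_comp, AffineIsometry.coe_toAffineMap, image_preimage_eq_of_subset hrange] at this

end BddBelow

theorem ConvexOn.card_mul_map_average_le {E ι : Type*} [AddCommGroup E] [Module ℝ E]
    [Fintype ι] {s : Set E} {g : E → ℝ} (hg : ConvexOn ℝ s g) {x : ι → E}
    (hx : ∀ t, x t ∈ s) :
    (Fintype.card ι : ℝ) * g ((Fintype.card ι : ℝ)⁻¹ • ∑ t, x t) ≤ ∑ t, g (x t) := by
  cases isEmpty_or_nonempty ι
  · simp
  have hcard : (0 : ℝ) < Fintype.card ι := by exact_mod_cast Fintype.card_pos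
  have := hg.map_centerMass_le (t := Finset.univ) (w := fun _ => 1) (p := x)
    (fun _ _ => zero_le_one) (by simpa using hcard) (fun t _ => hx t)
  simp only [Finset.centerMass, Finset.sum_const, Finset.card_univ, nsmul_eq_mul, mul_one,
    one_mul, one_smul, Function.comp_apply, smul_eq_mul] at this
  rwa [← le_div_iff₀' hcard, div_eq_inv_mul]

section WeightedMax

variable {ι : Type*} [Fintype ι] {Λ : Set (ι → ℝ)} {l : ι → ℝ}

-- A maximum when `Λ` is compact and nonempty; otherwise `sSup` may return a junk value.
noncomputable def weightedMax (Λ : Set (ι → ℝ)) (c : ι → ℝ) : ℝ :=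
  sSup ((fun l => ∑ i, l i * c i) '' Λ)

theorem sum_mul_le_weightedMax (hΛ : IsCompact Λ) (hl : l ∈ Λ) (c : ι → ℝ) :
    ∑ i, l i * c i ≤ weightedMax Λ c :=
  le_csSup (hΛ.image (f := fun l : ι → ℝ => ∑ i, l i * c i) (by fun_prop)).bddAbove
    ⟨l, hl, rfl⟩

theorem exists_weightedMax_eq_sum_mul (hΛ : IsCompact Λ) (hne : Λ.Nonempty) (c : ι → ℝ) :
    ∃ l ∈ Λ, weightedMax Λ c = ∑ i, l i * c i := by
  obtain ⟨l, hl, h⟩ :=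
    (hΛ.image (f := fun l : ι → ℝ => ∑ i, l i * c i) (by fun_prop)).sSup_mem (hne.image _)
  exact ⟨l, hl, h.symm⟩

theorem sum_mul_le_iSup (hl : l ∈ stdSimplex ℝ ι) (c : ι → ℝ) :
    ∑ i, l i * c i ≤ ⨆ i, c i :=
  calc ∑ i, l i * c i ≤ ∑ i, l i * ⨆ i, c i := by
        gcongr with i
        · exact hl.1 i
        · exact le_ciSup (Finite.bddAbove_range c) i
    _ = ⨆ i, c i := by rw [← Finset.sum_mul, hl.2, one_mul]

end WeightedMax

theorem csInf_image_le_mul_csInf_image {α : Type*} {X : Set α} {g h : α → ℝ} {c : ℝ}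
    (hX : X.Nonempty) (hg : BddBelow (g '' X)) (hc : 0 < c) (hgh : ∀ x ∈ X, g x ≤ c * h x) :
    sInf (g '' X) ≤ c * sInf (h '' X) := by
  rw [← div_le_iff₀' hc]
  refine le_csInf (hX.image h) ?_
  rintro _ ⟨x, hx, rfl⟩
  rw [div_le_iff₀' hc]
  exact (csInf_le hg ⟨x, hx, rfl⟩).trans (hgh x hx)

section Game

variable {ι τ : Type*} [Fintype ι] [Fintype τ] {U : ι → Type*} {Λ : Set (ι → ℝ)}

theorem card_mul_iSup_average_le_of_regret {E : Type*} [AddCommGroup E] [Module ℝ E]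
    {X : Set E} {f : ∀ i, E → U i → ℝ} {F : E → (∀ i, U i) → ℝ} [∀ i, Finite (U i)]
    [Nonempty (∀ i, U i)]
    (hΛcpt : IsCompact Λ) (hΛne : Λ.Nonempty) (hΛ : Λ ⊆ stdSimplex ℝ ι)
    (hf : ∀ i u, ConvexOn ℝ X fun x => f i x u)
    (hF : ∀ x ub, F x ub = weightedMax Λ fun i => f i x (ub i))
    {x : τ → E} (hx : ∀ t, x t ∈ X) (uu : τ → ∀ i, U i) {R : ι → ℝ}
    (hR : ∀ i u, ∑ t, f i (x t) u ≤ ∑ t, f i (x t) (uu t i) + R i) :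
    (Fintype.card τ : ℝ) * ⨆ ub, F ((Fintype.card τ : ℝ)⁻¹ • ∑ t, x t) ub
      ≤ ∑ t, F (x t) (uu t) + ⨆ i, R i := by
  set N : ℝ := (Fintype.card τ : ℝ)
  rw [Real.mul_iSup_of_nonneg (by positivity)]
  refine ciSup_le fun ub => ?_
  obtain ⟨l, hl, hFl⟩ :=
    exists_weightedMax_eq_sum_mul hΛcpt hΛne fun i => f i (N⁻¹ • ∑ t, x t) (ub i)
  rw [hF, hFl]
  calc N * ∑ i, l i * f i (N⁻¹ • ∑ t, x t) (ub i)
      = ∑ i, l i * (N * f i (N⁻¹ • ∑ t, x t) (ub i)) := by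
        rw [Finset.mul_sum]; exact Finset.sum_congr rfl fun i _ => by ring
    _ ≤ ∑ i, l i * (∑ t, f i (x t) (uu t i) + R i) := by
        gcongr with i
        · exact (hΛ hl).1 i
        · exact ((hf i (ub i)).card_mul_map_average_le hx).trans (hR i (ub i))
    _ = ∑ t, ∑ i, l i * f i (x t) (uu t i) + ∑ i, l i * R i := by
        simp only [mul_add, Finset.mul_sum, Finset.sum_add_distrib]
        rw [Finset.sum_comm]
    _ ≤ ∑ t, F (x t) (uu t) + ⨆ i, R i := by
        gcongr with t
        · exact (hF _ _).symm ▸ sum_mul_le_weightedMax hΛcpt hl _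
        · exact sum_mul_le_iSup (hΛ hl) R

theorem bddBelow_image_sum_of_eq_weightedMax {E : Type*} [NormedAddCommGroup E]
    [NormedSpace ℝ E] [FiniteDimensional ℝ E] {X : Set E} {f : ∀ i, E → U i → ℝ}
    {F : E → (∀ i, U i) → ℝ}
    (hΛcpt : IsCompact Λ) (hΛne : Λ.Nonempty) (hΛ : Λ ⊆ stdSimplex ℝ ι) (hX : IsBounded X)
    (hf : ∀ i u, ConvexOn ℝ X fun x => f i x u)
    (hF : ∀ x ub, F x ub = weightedMax Λ fun i => f i x (ub i)) (uu : τ → ∀ i, U i) :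
    BddBelow ((fun x => ∑ t, F x (uu t)) '' X) := by
  choose b hb using fun i u => (hf i u).bddBelow_image hX
  obtain ⟨l, hl⟩ := hΛne
  refine ⟨∑ t, ∑ i, l i * b i (uu t i), ?_⟩
  rintro _ ⟨x, hx, rfl⟩
  refine Finset.sum_le_sum fun t _ => ?_
  calc ∑ i, l i * b i (uu t i) ≤ ∑ i, l i * f i x (uu t i) := by
        gcongr with i
        · exact (hΛ hl).1 i
        · exact hb i _ ⟨x, hx, rfl⟩
    _ ≤ F x (uu t) := (hF _ _).symm ▸ sum_mul_le_weightedMax hΛcpt hl _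

end Game

theorem stmt_9_general {n m : ℕ} {U : Fin n → Type*}
    [∀ i, Fintype (U i)]
    (Λ : Set (Fin n → ℝ)) (hΛne : Λ.Nonempty) (hΛcpt : IsCompact Λ)
    (hΛ : Λ ⊆ stdSimplex ℝ (Fin n))
    (X : Set (Fin m → ℝ)) (hXne : X.Nonempty) (hXcpt : IsCompact X)
    (f : ∀ i : Fin n, (Fin m → ℝ) → U i → ℝ)
    (hfconv : ∀ i (u : U i), ConvexOn ℝ X fun x => f i x u)
    (F : (Fin m → ℝ) → (∀ i, U i) → ℝ)
    (hF : ∀ x ub, F x ub = sSup ((fun l => ∑ i, l i * f i x (ub i)) '' Λ))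
    (T : ℕ) (hT : 1 ≤ T)
    (x : Fin T → (Fin m → ℝ)) (uu : Fin T → ∀ i, U i)
    (hxX : ∀ t, x t ∈ X)
    (Rx : ℝ) (R : Fin n → ℝ)
    (hRx : (∑ t, F (x t) (uu t))
        - sInf ((fun x' => ∑ t, F x' (uu t)) '' X) ≤ Rx)
    (hRu : ∀ i, (⨆ u' : U i, ∑ t, f i (x t) u') - ∑ t, f i (x t) (uu t i) ≤ R i) :
    (⨆ ub : ∀ i, U i, F ((T : ℝ)⁻¹ • ∑ t, x t) ub)
      - sInf ((fun x' => ⨆ ub : ∀ i, U i, F x' ub) '' X)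
      ≤ (Rx + ⨆ i, R i) / T := by
  have hT0 : (0 : ℝ) < T := by exact_mod_cast hT
  have : Nonempty (∀ i, U i) := ⟨uu ⟨0, hT⟩⟩
  have hregret : ∀ i u, ∑ t, f i (x t) u ≤ ∑ t, f i (x t) (uu t i) + R i := fun i u => by
    linarith [hRu i, le_ciSup (Finite.bddAbove_range fun u' => ∑ t, f i (x t) u') u]
  have hdual := card_mul_iSup_average_le_of_regret hΛcpt hΛne hΛ hfconv hF hxX uu hregret
  rw [Fintype.card_fin] at hdual
  have hbdd := bddBelow_image_sum_of_eq_weightedMax hΛcpt hΛne hΛ hXcpt.isBounded hfconv hF uu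
  have hprimal := csInf_image_le_mul_csInf_image hXne hbdd hT0 fun x' _ => by
    simpa using Finset.sum_le_card_nsmul Finset.univ _ _ fun t _ =>
      le_ciSup (Finite.bddAbove_range (F x')) (uu t)
  rw [le_div_iff₀ hT0, sub_mul]
  linarith

/-- Theorem B.2 (explicit maximum, thm.constraint-app1-main): with
`F(x,ū) = max_{λ∈Λ} ∑ᵢ λᵢ fⁱ(x,uⁱ)`, regret bounds for the primal player
(w.r.t. `F`) and per-coordinate dual players give near-optimality of the
average iterate. -/
theorem stmt_9 {n m : ℕ} (hn : 0 < n) {U : Fin n → Type*}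
    [∀ i, Fintype (U i)] [∀ i, Nonempty (U i)]
    (Λ : Set (Fin n → ℝ)) (hΛne : Λ.Nonempty) (hΛcpt : IsCompact Λ)
    (hΛ : Λ ⊆ stdSimplex ℝ (Fin n))
    (X : Set (Fin m → ℝ)) (hXne : X.Nonempty) (hXcpt : IsCompact X)
    (hXconv : Convex ℝ X)
    (f : ∀ i : Fin n, (Fin m → ℝ) → U i → ℝ)
    (hfconv : ∀ i (u : U i), ConvexOn ℝ X fun x => f i x u)
    (F : (Fin m → ℝ) → (∀ i, U i) → ℝ)
    (hF : ∀ x ub, F x ub = sSup ((fun l => ∑ i, l i * f i x (ub i)) '' Λ))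
    (T : ℕ) (hT : 1 ≤ T)
    (x : Fin T → (Fin m → ℝ)) (uu : Fin T → ∀ i, U i)
    (hxX : ∀ t, x t ∈ X)
    (Rx : ℝ) (R : Fin n → ℝ)
    (hRx : (∑ t, F (x t) (uu t))
        - sInf ((fun x' => ∑ t, F x' (uu t)) '' X) ≤ Rx)
    (hRu : ∀ i, (⨆ u' : U i, ∑ t, f i (x t) u') - ∑ t, f i (x t) (uu t i) ≤ R i) :
    (⨆ ub : ∀ i, U i, F ((T : ℝ)⁻¹ • ∑ t, x t) ub)
      - sInf ((fun x' => ⨆ ub : ∀ i, U i, F x' ub) '' X)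
      ≤ (Rx + ⨆ i, R i) / T :=
  stmt_9_general Λ hΛne hΛcpt hΛ X hXne hXcpt f hfconv F hF T hT x uu hxX Rx R hRx hRu
end

section
/- Suppose f^i : X × U^i → ℝ are nonnegative functions, Λ = Δ(n), and F(x,ū) = max_i f^i(x,u^i). If for each i the sequence u^i_t satisfies max_{u∈U^i} ∑_{t=1}^T f^i(x_t,u) − ∑_{t=1}^T f^i(x_t,u^i_t) ≤ R^i, then for every ū ∈ ∏ᵢU^i: ∑_{t=1}^T F(x_t,ū) − ∑_{t=1}^T F(x_t,ū_t) ≤ ∑ᵢ R^i + n·∑_{t=1}^T F(x_t,ū_t), where ū_t = (u¹_t,…,uⁿ_t). -/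
/-!
By nonnegativity, `maxᵢ fⁱ(x, uⁱ) ≤ ∑ᵢ fⁱ(x, uⁱ)`. Summing over `t` and exchanging the sums
turns the comparator's total into `∑ᵢ ∑ₜ fⁱ(xₜ, uⁱ)`; each inner sum is at most
`Rⁱ + ∑ₜ fⁱ(xₜ, uⁱₜ)` by the regret bound of coordinate `i`, and `fⁱ(xₜ, uⁱₜ) ≤ F(xₜ, ūₜ)`.
-/

open Finset

/-- For empty `ι` both sides are `0`, since `sSup ∅ = 0` in `ℝ`. -/
lemma Real.iSup_le_sum {ι : Type*} [Fintype ι] {g : ι → ℝ} (hg : ∀ i, 0 ≤ g i) :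
    ⨆ i, g i ≤ ∑ i, g i :=
  Real.iSup_le (fun i => single_le_sum (fun j _ => hg j) (mem_univ i))
    (sum_nonneg fun j _ => hg j)

lemma le_add_of_ciSup_sub_le {α : Type*} [Finite α] {g : α → ℝ} {b r : ℝ}
    (h : (⨆ a, g a) - b ≤ r) (a : α) : g a ≤ r + b := by
  linarith [le_ciSup (Finite.bddAbove_range g) a]

theorem stmt_11_general {n : ℕ} {X : Type*} {U : Fin n → Type*}
    [∀ i, Fintype (U i)]
    (f : ∀ i : Fin n, X → U i → ℝ)
    (hfnonneg : ∀ i x u, 0 ≤ f i x u)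
    (T : ℕ)
    (x : Fin T → X) (uu : Fin T → ∀ i, U i)
    (R : Fin n → ℝ)
    (hRu : ∀ i, (⨆ u' : U i, ∑ t, f i (x t) u') - ∑ t, f i (x t) (uu t i) ≤ R i) :
    ∀ ub : ∀ i, U i,
      (∑ t, ⨆ i, f i (x t) (ub i)) - (∑ t, ⨆ i, f i (x t) (uu t i))
        ≤ (∑ i, R i) + n * ∑ t, ⨆ i, f i (x t) (uu t i) := by
  intro ub
  set realized := ∑ t, ⨆ i, f i (x t) (uu t i)
  have realized_nonneg : 0 ≤ realized :=
    sum_nonneg fun t _ => Real.iSup_nonneg fun i => hfnonneg i _ _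
  have coord_le_realized : ∀ i, ∑ t, f i (x t) (uu t i) ≤ realized := fun i =>
    sum_le_sum fun t _ => le_ciSup (Finite.bddAbove_range fun j => f j (x t) (uu t j)) i
  have : ∑ t, ⨆ i, f i (x t) (ub i) ≤ (∑ i, R i) + n * realized :=
    calc ∑ t, ⨆ i, f i (x t) (ub i)
        ≤ ∑ t, ∑ i, f i (x t) (ub i) :=
          sum_le_sum fun t _ => Real.iSup_le_sum fun i => hfnonneg i _ _
      _ = ∑ i, ∑ t, f i (x t) (ub i) := sum_comm
      _ ≤ ∑ i, (R i + realized) := sum_le_sum fun i _ =>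
          (le_add_of_ciSup_sub_le (hRu i) (ub i)).trans (by gcongr; exact coord_le_realized i)
      _ = (∑ i, R i) + n * realized := by simp [sum_add_distrib]
  linarith

/-- Key inequality (equ.usedforinfe) in Theorem B.4: with nonnegative
`fⁱ` and `F(x,ū) = maxᵢ fⁱ(x,uⁱ)`, per-coordinate regret bounds control
the regret of the maximum up to `n` times the realized maximum. -/
theorem stmt_11 {n : ℕ} (hn : 0 < n) {X : Type*} {U : Fin n → Type*}
    [∀ i, Fintype (U i)] [∀ i, Nonempty (U i)]
    (f : ∀ i : Fin n, X → U i → ℝ)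
    (hfnonneg : ∀ i x u, 0 ≤ f i x u)
    (T : ℕ) (hT : 1 ≤ T)
    (x : Fin T → X) (uu : Fin T → ∀ i, U i)
    (R : Fin n → ℝ)
    (hRu : ∀ i, (⨆ u' : U i, ∑ t, f i (x t) u') - ∑ t, f i (x t) (uu t i) ≤ R i) :
    ∀ ub : ∀ i, U i,
      (∑ t, ⨆ i, f i (x t) (ub i)) - (∑ t, ⨆ i, f i (x t) (uu t i))
        ≤ (∑ i, R i) + n * ∑ t, ⨆ i, f i (x t) (uu t i) :=
  stmt_11_general f hfnonneg T x uu R hRu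
end

section
/- Suppose sequences x_t ∈ X, ū_t ∈ ∏ᵢU^i satisfy the per-coordinate regret bounds max_{u∈U^i} ∑_t f^i(x_t,u) − ∑_t f^i(x_t,u^i_t) ≤ R^i with f^i ≥ 0 and F(x,ū) = maxᵢ f^i(x,u^i), and additionally the problem is ε-infeasible: for every probability distribution μ on X, max_{ū} E_{x∼μ} F(x,ū) > ε. Then ∑_{t=1}^T F(x_t,ū_t) ≥ (Tε − ∑ᵢ Rⁱ)/(n+1). -/
/-- Infeasibility detection (second part of Theorem B.4): if the robust
feasibility problem is `ε`-infeasible for every mixed strategy, then the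
realized violation `∑_t F(x_t, ū_t)` is bounded below. -/
theorem stmt_17 {n : ℕ} (hn : 0 < n) {X : Type*} [Fintype X] [Nonempty X]
    {U : Fin n → Type*} [∀ i, Fintype (U i)] [∀ i, Nonempty (U i)]
    (f : ∀ i : Fin n, X → U i → ℝ)
    (hfnonneg : ∀ i x u, 0 ≤ f i x u)
    (T : ℕ) (hT : 1 ≤ T)
    (x : Fin T → X) (uu : Fin T → ∀ i, U i)
    (R : Fin n → ℝ)
    (hRu : ∀ i, (⨆ u' : U i, ∑ t, f i (x t) u') - ∑ t, f i (x t) (uu t i) ≤ R i)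
    (ε : ℝ) (hε : 0 < ε)
    (hinfeas : ∀ μ : X → ℝ, (∀ x', 0 ≤ μ x') → (∑ x', μ x') = 1 →
      ε < ⨆ ub : ∀ i, U i, ∑ x', μ x' * ⨆ i, f i x' (ub i)) :
    ((T : ℝ) * ε - ∑ i, R i) / (n + 1) ≤ ∑ t, ⨆ i, f i (x t) (uu t i) := by
  classical
  haveI : Nonempty (Fin n) := ⟨⟨0, hn⟩⟩
  have hT0 : (0:ℝ) < T := by exact_mod_cast hT
  set μ : X → ℝ := fun x' => (∑ t, if x t = x' then (1:ℝ) else 0) / T with hμ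
  have hμnn : ∀ x', 0 ≤ μ x' := by
    intro x'
    apply div_nonneg _ hT0.le
    apply Finset.sum_nonneg
    intro t _
    split <;> norm_num
  have hμsum : ∑ x', μ x' = 1 := by
    simp only [hμ]
    rw [← Finset.sum_div, Finset.sum_comm]
    simp [Finset.sum_ite_eq]
    omega
  have key := hinfeas μ hμnn hμsum
  set g : (∀ i, U i) → ℝ := fun ub => ∑ x', μ x' * ⨆ i, f i x' (ub i) with hg
  obtain ⟨ub, hub⟩ := Finite.exists_max g
  have key2 : ε < g ub := lt_of_lt_of_le key (ciSup_le hub)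
  have hgval : g ub = (∑ t, ⨆ i, f i (x t) (ub i)) / T := by
    simp only [hg, hμ, div_mul_eq_mul_div, Finset.sum_mul, ite_mul, one_mul, zero_mul]
    rw [← Finset.sum_div]
    congr 1
    rw [Finset.sum_comm]
    apply Finset.sum_congr rfl
    intro t _
    simp [Finset.sum_ite_eq]
  -- realized violation S
  set S : ℝ := ∑ t, ⨆ i, f i (x t) (uu t i) with hS
  have hSnn : 0 ≤ S := by
    apply Finset.sum_nonneg
    intro t _
    have i0 : Fin n := Classical.arbitrary (Fin n)
    exact le_trans (hfnonneg i0 (x t) (uu t i0))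
      (le_ciSup (f := fun j => f j (x t) (uu t j)) (Finite.bddAbove_range _) i0)
  -- step: T ε < ∑_t G(x t, ub)
  have h1 : (T : ℝ) * ε < ∑ t, ⨆ i, f i (x t) (ub i) := by
    have := key2
    rw [hgval, lt_div_iff₀ hT0] at this
    linarith
  -- sup ≤ sum of coordinates
  have h2 : ∑ t, (⨆ i, f i (x t) (ub i)) ≤ ∑ i, ∑ t, f i (x t) (ub i) := by
    rw [Finset.sum_comm]
    apply Finset.sum_le_sum
    intro t _
    apply ciSup_le
    intro i
    exact Finset.single_le_sum (fun j _ => hfnonneg j (x t) (ub j)) (Finset.mem_univ i)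
  -- regret bound per coordinate
  have h3 : ∀ i, ∑ t, f i (x t) (ub i) ≤ R i + ∑ t, f i (x t) (uu t i) := by
    intro i
    have hle : ∑ t, f i (x t) (ub i) ≤ ⨆ u' : U i, ∑ t, f i (x t) u' :=
      le_ciSup (f := fun u' => ∑ t, f i (x t) u') (Finite.bddAbove_range _) (ub i)
    have := hRu i
    linarith
  have h4 : ∑ i, ∑ t, f i (x t) (uu t i) ≤ (n : ℝ) * S := by
    rw [Finset.sum_comm, hS, Finset.mul_sum]
    apply Finset.sum_le_sum
    intro t _
    calc ∑ i, f i (x t) (uu t i) ≤ ∑ _i : Fin n, ⨆ i, f i (x t) (uu t i) := by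
          apply Finset.sum_le_sum
          intro i _
          exact le_ciSup (f := fun j => f j (x t) (uu t j)) (Finite.bddAbove_range _) i
      _ = (n : ℝ) * ⨆ i, f i (x t) (uu t i) := by
          simp [Finset.sum_const, nsmul_eq_mul]
  have h5 : ∑ i, ∑ t, f i (x t) (ub i) ≤ ∑ i, R i + (n : ℝ) * S := by
    calc ∑ i, ∑ t, f i (x t) (ub i) ≤ ∑ i, (R i + ∑ t, f i (x t) (uu t i)) :=
          Finset.sum_le_sum fun i _ => h3 i
      _ = ∑ i, R i + ∑ i, ∑ t, f i (x t) (uu t i) := Finset.sum_add_distrib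
      _ ≤ ∑ i, R i + (n : ℝ) * S := by linarith
  have hfin : (T : ℝ) * ε - ∑ i, R i ≤ ((n : ℝ) + 1) * S := by nlinarith
  rw [div_le_iff₀ (by positivity)]
  linarith
end
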